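/- Let (Φ_n,{Π_i}_{i∈Φ_n}) be a finite t-stability on D such that for every i ∈ Φ_n and all nonzero objects X, Y ∈ Π_i one has Hom(⟨X⟩,⟨Y⟩) ≠ 0 and Hom(⟨Y⟩,⟨X⟩) ≠ 0. Then (Φ_n,{Π_i}_{i∈Φ_n}) is finite finest. -/

import Mathlib

/-!
Common infrastructure for formalizing semi-orthogonal decompositions (SODs),
t-stabilities, admissible filtrations, mutations, Serre functors, exceptional
sequences and Verdier quotients, following the paper
"Semi-orthogonal decompositions via t-stabilities".

Full triangulated subcategories of `D` closed under extensions, direct summands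
and shifts are modelled as subsets of objects `T : Set D` satisfying the
closure predicate `IsTriangClosed`.  All notions are stated relative to an
ambient such subcategory `amb : Set D` (take `amb = Set.univ` for `D` itself).
-/

open CategoryTheory Limits Pretriangulated ZeroObject

universe w v u v₂ u₂

namespace SODPaper

variable {D : Type u} [Category.{v} D] [Preadditive D] [HasZeroObject D]
  [HasShift D ℤ] [∀ n : ℤ, (CategoryTheory.shiftFunctor D n).Additive]
  [Pretriangulated D]

/-- The closure conditions satisfied by a strictly full triangulated subcategory of `D`
closed under extensions, direct summands and shifts. -/
structure IsTriangClosed (T : Set D) : Prop where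
  zero_mem : (0 : D) ∈ T
  iso_mem : ∀ {X Y : D}, (X ≅ Y) → X ∈ T → Y ∈ T
  shift_mem : ∀ X ∈ T, ∀ n : ℤ, X⟦n⟧ ∈ T
  ext_mem : ∀ T' ∈ distTriang D, T'.obj₁ ∈ T → T'.obj₃ ∈ T → T'.obj₂ ∈ T
  summand_mem : ∀ {X Y : D} (s : Y ⟶ X) (r : X ⟶ Y), s ≫ r = 𝟙 Y → X ∈ T → Y ∈ T

/-- `⟨S⟩`: the smallest full triangulated subcategory of `D` containing `S` and closed
under extensions, direct summands and shifts. -/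
def gen (S : Set D) : Set D := ⋂₀ {T : Set D | IsTriangClosed T ∧ S ⊆ T}

/-- `Hom(A, B) = 0`. -/
def homOrth (A B : Set D) : Prop := ∀ X ∈ A, ∀ Y ∈ B, ∀ f : X ⟶ Y, f = 0

/-- The right orthogonal `B^⊥ = {X : Hom(B, X) = 0}` (inside all of `D`). -/
def rOrth (B : Set D) : Set D := {X : D | ∀ Y ∈ B, ∀ f : Y ⟶ X, f = 0}

/-- The left orthogonal `^⊥B = {X : Hom(X, B) = 0}` (inside all of `D`). -/
def lOrth (B : Set D) : Set D := {X : D | ∀ Y ∈ B, ∀ f : X ⟶ Y, f = 0}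

/-- `A` is a right admissible subcategory of the (full) subcategory with objects `T`:
the inclusion functor admits a right adjoint (i.e. it is a left adjoint). -/
def RightAdmissibleIn (A T : Set D) : Prop :=
  ∃ h : ∀ ⦃X : D⦄, X ∈ A → X ∈ T, (ObjectProperty.ιOfLE (P := fun X : D => X ∈ A) (P' := fun X : D => X ∈ T) h).IsLeftAdjoint

/-- `A` is a left admissible subcategory of the (full) subcategory with objects `T`:
the inclusion functor admits a left adjoint (i.e. it is a right adjoint). -/
def LeftAdmissibleIn (A T : Set D) : Prop :=
  ∃ h : ∀ ⦃X : D⦄, X ∈ A → X ∈ T, (ObjectProperty.ιOfLE (P := fun X : D => X ∈ A) (P' := fun X : D => X ∈ T) h).IsRightAdjoint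

/-- `A` is an admissible subcategory of the subcategory with objects `T`. -/
def AdmissibleIn (A T : Set D) : Prop := RightAdmissibleIn A T ∧ LeftAdmissibleIn A T

/-- A semi-orthogonal decomposition `(P 0, …, P (n-1))` of the triangulated subcategory
with objects `amb` (take `amb = Set.univ` for an SOD of `D`). -/
structure IsSODIn (amb : Set D) {n : ℕ} (P : Fin n → Set D) : Prop where
  subset : ∀ i, P i ⊆ amb
  closed : ∀ i, IsTriangClosed (P i)
  nonzero : ∀ i, ∃ X ∈ P i, ¬ IsZero X
  orth : ∀ i j : Fin n, i < j → homOrth (P j) (P i)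
  generates : gen (⋃ i, P i) = amb

/-- A semi-orthogonal decomposition of `D`. -/
def IsSOD {n : ℕ} (P : Fin n → Set D) : Prop := IsSODIn Set.univ P

/-- An admissible SOD: each term is admissible in the ambient subcategory. -/
def IsAdmissibleSODIn (amb : Set D) {n : ℕ} (P : Fin n → Set D) : Prop :=
  IsSODIn amb P ∧ ∀ i, AdmissibleIn (P i) amb

/-- The right mutation `ρ` of an SOD at the (0-based) position `i`:
the pair `(P i, P (i+1))` is replaced by `(P i ^⊥ ∩ ⟨P i, P (i+1)⟩, P i)`. -/
def rightMut (amb : Set D) {n : ℕ} (P : Fin n → Set D) (i : ℕ) (hi : i + 1 < n) :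
    Fin n → Set D :=
  fun k =>
    if k = (⟨i, Nat.lt_of_succ_lt hi⟩ : Fin n) then
      rOrth (P ⟨i, Nat.lt_of_succ_lt hi⟩) ∩
        gen (P ⟨i, Nat.lt_of_succ_lt hi⟩ ∪ P ⟨i + 1, hi⟩) ∩ amb
    else if k = (⟨i + 1, hi⟩ : Fin n) then P ⟨i, Nat.lt_of_succ_lt hi⟩
    else P k

/-- The left mutation `ρ̌` of an SOD at the (0-based) position `i`:
the pair `(P i, P (i+1))` is replaced by `(P (i+1), ^⊥(P (i+1)) ∩ ⟨P i, P (i+1)⟩)`. -/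
def leftMut (amb : Set D) {n : ℕ} (P : Fin n → Set D) (i : ℕ) (hi : i + 1 < n) :
    Fin n → Set D :=
  fun k =>
    if k = (⟨i, Nat.lt_of_succ_lt hi⟩ : Fin n) then P ⟨i + 1, hi⟩
    else if k = (⟨i + 1, hi⟩ : Fin n) then
      lOrth (P ⟨i + 1, hi⟩) ∩
        gen (P ⟨i, Nat.lt_of_succ_lt hi⟩ ∪ P ⟨i + 1, hi⟩) ∩ amb
    else P k

/-- All iterated right and left mutations of an SOD. -/
inductive MutClosure (amb : Set D) {n : ℕ} : (Fin n → Set D) → (Fin n → Set D) → Prop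
  | refl (P : Fin n → Set D) : MutClosure amb P P
  | right {P P' : Fin n → Set D} (h : MutClosure amb P P') (i : ℕ) (hi : i + 1 < n) :
      MutClosure amb P (rightMut amb P' i hi)
  | left {P P' : Fin n → Set D} (h : MutClosure amb P P') (i : ℕ) (hi : i + 1 < n) :
      MutClosure amb P (leftMut amb P' i hi)

/-- An `∞`-admissible SOD: all of its iterated right and left mutations (including
itself) are admissible SODs. -/
def IsInftyAdmissibleSODIn (amb : Set D) {n : ℕ} (P : Fin n → Set D) : Prop :=
  IsSODIn amb P ∧ ∀ P' : Fin n → Set D, MutClosure amb P P' → IsAdmissibleSODIn amb P'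

/-- `P` is finer than `Q` (for linearly ordered families of subcategories: SODs or
finite t-stabilities): `Q` is obtained from `P` by grouping consecutive terms via a
surjective monotone map of index sets and taking generated subcategories. -/
def Finer {Φ : Type*} {Ψ : Type*} [LinearOrder Φ] [LinearOrder Ψ]
    (P : Φ → Set D) (Q : Ψ → Set D) : Prop :=
  ∃ r : Φ → Ψ, Function.Surjective r ∧ Monotone r ∧
    ∀ ψ : Ψ, Q ψ = gen (⋃ φ ∈ {φ : Φ | r φ = ψ}, P φ)

/-- A finest SOD of `amb`: an SOD which is minimal for the `Finer` preorder, i.e.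
every SOD which is finer than it is equivalent to it. -/
def IsFinestSODIn (amb : Set D) {n : ℕ} (P : Fin n → Set D) : Prop :=
  IsSODIn amb P ∧ ∀ (m : ℕ) (Q : Fin m → Set D), IsSODIn amb Q → Finer Q P → Finer P Q

/-- A finest `∞`-admissible SOD. -/
def IsFinestInftyAdmissibleSODIn (amb : Set D) {n : ℕ} (P : Fin n → Set D) : Prop :=
  IsInftyAdmissibleSODIn amb P ∧ IsFinestSODIn amb P

/-- All iterated right and left orthogonals of a subcategory (inside `amb`). -/
inductive OrthClosure (amb : Set D) : Set D → Set D → Prop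
  | refl (A : Set D) : OrthClosure amb A A
  | right {A B : Set D} (h : OrthClosure amb A B) : OrthClosure amb A (rOrth B ∩ amb)
  | left {A B : Set D} (h : OrthClosure amb A B) : OrthClosure amb A (lOrth B ∩ amb)

/-- An `∞`-admissible subcategory: all of its iterated right and left orthogonals
are admissible. -/
def IsInftyAdmissibleSubcat (amb A : Set D) : Prop :=
  ∀ B : Set D, OrthClosure amb A B → AdmissibleIn B amb

/-- `𝒜(amb)`: the set of finest `∞`-admissible subcategories of `amb`, i.e. the
`∞`-admissible subcategories occurring as a term of some finest `∞`-admissible SOD. -/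
def scriptA (amb : Set D) : Set (Set D) :=
  {A : Set D | IsInftyAdmissibleSubcat amb A ∧
    ∃ (n : ℕ) (P : Fin n → Set D) (i : Fin n),
      IsFinestInftyAdmissibleSODIn amb P ∧ P i = A}

/-- A finite filtration `0 = T 0 ⊊ T 1 ⊊ ⋯ ⊊ T n = amb` by full triangulated
subcategories. -/
structure IsFilt (amb : Set D) {n : ℕ} (T : Fin (n + 1) → Set D) : Prop where
  closed : ∀ j, IsTriangClosed (T j)
  bot : T 0 = {X : D | IsZero X}
  top : T (Fin.last n) = amb
  strict : ∀ j : Fin n, T j.castSucc ⊂ T j.succ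

/-- A finite right admissible filtration: `T i` is right admissible in `T (i+1)`
for `1 ≤ i ≤ n - 1`. -/
def IsRightAdmFilt (amb : Set D) {n : ℕ} (T : Fin (n + 1) → Set D) : Prop :=
  IsFilt amb T ∧ ∀ j : Fin n, 1 ≤ (j : ℕ) → RightAdmissibleIn (T j.castSucc) (T j.succ)

/-- A finite left admissible filtration. -/
def IsLeftAdmFilt (amb : Set D) {n : ℕ} (T : Fin (n + 1) → Set D) : Prop :=
  IsFilt amb T ∧ ∀ j : Fin n, 1 ≤ (j : ℕ) → LeftAdmissibleIn (T j.castSucc) (T j.succ)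

/-- A finite strongly admissible (s-admissible) filtration: a right admissible
filtration such that moreover each `T i ^⊥ ∩ T (i+1)` is admissible in `amb`. -/
def IsSAdmFilt (amb : Set D) {n : ℕ} (T : Fin (n + 1) → Set D) : Prop :=
  IsRightAdmFilt amb T ∧
    ∀ j : Fin n, 1 ≤ (j : ℕ) → AdmissibleIn (rOrth (T j.castSucc) ∩ T j.succ) amb

/-- The right mutation `σ` of a finite filtration at position `p` (`1 ≤ p ≤ n - 1`):
`T p` is replaced by `⟨T p ^⊥ ∩ T (p+1), T (p-1)⟩`. -/
def filtRightMut (amb : Set D) {n : ℕ} (T : Fin (n + 1) → Set D) (p : ℕ)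
    (hp1 : 1 ≤ p) (hp2 : p < n) : Fin (n + 1) → Set D :=
  fun k =>
    if k = (⟨p, by omega⟩ : Fin (n + 1)) then
      gen ((rOrth (T ⟨p, by omega⟩) ∩ T ⟨p + 1, by omega⟩ ∩ amb) ∪ T ⟨p - 1, by omega⟩)
    else T k

/-- The left mutation `σ̌` of a finite filtration at position `p`, defined dually to
`filtRightMut`: `T p` is replaced by
`⟨T (p-1), ^⊥(T (p-1) ^⊥ ∩ T p) ∩ T (p-1) ^⊥ ∩ T (p+1)⟩` (this is the formula obtained
by transporting the left mutation of SODs through the correspondence `ξ`). -/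
def filtLeftMut (amb : Set D) {n : ℕ} (T : Fin (n + 1) → Set D) (p : ℕ)
    (hp1 : 1 ≤ p) (hp2 : p < n) : Fin (n + 1) → Set D :=
  fun k =>
    if k = (⟨p, by omega⟩ : Fin (n + 1)) then
      gen (T ⟨p - 1, by omega⟩ ∪
        (lOrth (rOrth (T ⟨p - 1, by omega⟩) ∩ T ⟨p, by omega⟩) ∩
          rOrth (T ⟨p - 1, by omega⟩) ∩ T ⟨p + 1, by omega⟩ ∩ amb))
    else T k

/-- All iterated right and left mutations of a finite filtration. -/
inductive FiltMutClosure (amb : Set D) {n : ℕ} :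
    (Fin (n + 1) → Set D) → (Fin (n + 1) → Set D) → Prop
  | refl (T : Fin (n + 1) → Set D) : FiltMutClosure amb T T
  | right {T T' : Fin (n + 1) → Set D} (h : FiltMutClosure amb T T') (p : ℕ)
      (hp1 : 1 ≤ p) (hp2 : p < n) : FiltMutClosure amb T (filtRightMut amb T' p hp1 hp2)
  | left {T T' : Fin (n + 1) → Set D} (h : FiltMutClosure amb T T') (p : ℕ)
      (hp1 : 1 ≤ p) (hp2 : p < n) : FiltMutClosure amb T (filtLeftMut amb T' p hp1 hp2)

/-- An `∞`-s-admissible filtration: all of its iterated right and left mutations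
(including itself) are s-admissible. -/
def IsInftySAdmFilt (amb : Set D) {n : ℕ} (T : Fin (n + 1) → Set D) : Prop :=
  IsFilt amb T ∧ ∀ T' : Fin (n + 1) → Set D, FiltMutClosure amb T T' → IsSAdmFilt amb T'

/-- The filtration `X` is finer than the filtration `Y`. -/
def FinerFilt {n m : ℕ} (X : Fin (n + 1) → Set D) (Y : Fin (m + 1) → Set D) : Prop :=
  ∃ r : Fin n → Fin m, Function.Surjective r ∧ Monotone r ∧
    ∀ j : Fin m, Y j.succ = gen (⋃ i ∈ {i : Fin n | r i = j}, X i.succ)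

/-- A finest filtration: minimal among right admissible filtrations for the
partial order `FinerFilt`. -/
def IsFinestFilt (amb : Set D) {n : ℕ} (T : Fin (n + 1) → Set D) : Prop :=
  ∀ (m : ℕ) (T' : Fin (m + 1) → Set D), IsRightAdmFilt amb T' → FinerFilt T' T →
    FinerFilt T T'

/-- A finite finest `∞`-s-admissible filtration. -/
def IsFinestInftySAdmFilt (amb : Set D) {n : ℕ} (T : Fin (n + 1) → Set D) : Prop :=
  IsInftySAdmFilt amb T ∧ IsFinestFilt amb T

/-- The map `ξ` sending an SOD `(P 0, …, P (n-1))` to the filtration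
`T j = ⟨P i : i + j ≥ n⟩ = P_{≥ n - j + 1}` (in the 1-based numbering of the paper). -/
def xi {n : ℕ} (P : Fin n → Set D) : Fin (n + 1) → Set D :=
  fun j => gen (⋃ i ∈ {i : Fin n | n ≤ (i : ℕ) + (j : ℕ)}, P i)

/-- The conditions for a semistable subcategory of a t-stability: a strictly full,
extension-closed, nonzero subcategory. -/
structure IsSemistableClass (A : Set D) : Prop where
  iso_mem : ∀ {X Y : D}, (X ≅ Y) → X ∈ A → Y ∈ A
  ext_mem : ∀ T' ∈ distTriang D, T'.obj₁ ∈ A → T'.obj₃ ∈ A → T'.obj₂ ∈ A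
  nonzero : ∃ X ∈ A, ¬ IsZero X

/-- `X` admits a Harder–Narasimhan filtration with respect to the family `P`:
a finite tower of triangles `0 = Y n → Y (n-1) → ⋯ → Y 1 → Y 0 = X` whose successive
cones are nonzero, semistable, with strictly decreasing phases (the phase of the cone
attached to `Y (i+1) → Y i` being `idx i`, so that `idx` is strictly monotone). -/
def HasHNFiltration {Φ : Type w} [LinearOrder Φ] (P : Φ → Set D) (X : D) : Prop :=
  ∃ (n : ℕ) (Y : Fin (n + 1) → D) (idx : Fin n → Φ),
    Y 0 = X ∧ IsZero (Y (Fin.last n)) ∧ StrictMono idx ∧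
    ∀ i : Fin n, ∃ (A : D) (f : Y i.succ ⟶ Y i.castSucc) (g : Y i.castSucc ⟶ A)
      (h : A ⟶ (Y i.succ)⟦(1 : ℤ)⟧),
      Triangle.mk f g h ∈ (distTriang D) ∧ A ∈ P (idx i) ∧ ¬ IsZero A

/-- A t-stability with trivial shift action `τ = id` on the linearly ordered index set
`Φ`, on the triangulated subcategory of `D` with objects `amb`.  (By the paper's
remark, every *finite* t-stability automatically has `τ = id`, so for finite `Φ` this
is exactly the notion of a (local) finite t-stability.) -/
structure IsTStabOn (amb : Set D) {Φ : Type w} [LinearOrder Φ] (P : Φ → Set D) : Prop where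
  subset : ∀ φ, P φ ⊆ amb
  semistable : ∀ φ, IsSemistableClass (P φ)
  shiftInv : ∀ φ (X : D), X ∈ P φ ↔ X⟦(1 : ℤ)⟧ ∈ P φ
  hom : ∀ φ' φ'' : Φ, φ'' < φ' → ∀ X ∈ P φ', ∀ Y ∈ P φ'', ∀ l : ℤ, l ≤ 0 →
    ∀ f : X ⟶ Y⟦l⟧, f = 0
  hn : ∀ X ∈ amb, ¬ IsZero X → HasHNFiltration P X

/-- A finite t-stability on `D`, presented (up to equivalence) on the linearly ordered
index set `Φ_n = Fin n`. -/
def IsFiniteTStab {n : ℕ} (P : Fin n → Set D) : Prop :=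
  IsTStabOn Set.univ P

/-- A finite finest t-stability: minimal for the `Finer` partial order among finite
t-stabilities. -/
def IsFinestTStab {n : ℕ} (P : Fin n → Set D) : Prop :=
  IsFiniteTStab P ∧ ∀ (m : ℕ) (Q : Fin m → Set D), IsFiniteTStab Q → Finer Q P → Finer P Q

section Linear

variable (𝕜 : Type w) [Field 𝕜] [Linear 𝕜 D]

/-- A Serre functor on the `𝕜`-linear triangulated category `D`: a triangulated
auto-equivalence `S` together with isomorphisms `Hom(A, B) ≅ Hom(B, S A)^*`,
natural in `A` and `B`. -/
structure SerreFunctor where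
  functor : D ⥤ D
  equivalence : functor.IsEquivalence
  commShift : functor.CommShift ℤ
  isTriangulated : letI := commShift; functor.IsTriangulated
  pairing : ∀ A B : D, (A ⟶ B) ≃ₗ[𝕜] ((B ⟶ functor.obj A) →ₗ[𝕜] 𝕜)
  natural_left : ∀ {A A' B : D} (f : A' ⟶ A) (h : A ⟶ B) (u : B ⟶ functor.obj A'),
    pairing A' B (f ≫ h) u = pairing A B h (u ≫ functor.map f)
  natural_right : ∀ {A B B' : D} (h : A ⟶ B) (g : B ⟶ B') (u : B' ⟶ functor.obj A),
    pairing A B' (h ≫ g) u = pairing A B h (g ≫ u)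

/-- An exceptional object: `Hom(E, E) = 𝕜` and `Hom(E, E[l]) = 0` for `l ≠ 0`. -/
def IsExceptional (E : D) : Prop :=
  Function.Bijective (fun c : 𝕜 => c • (𝟙 E)) ∧
    ∀ l : ℤ, l ≠ 0 → ∀ f : E ⟶ E⟦l⟧, f = 0

/-- An exceptional sequence `(E 0, …, E (n-1))`. -/
def IsExcSeq {n : ℕ} (E : Fin n → D) : Prop :=
  (∀ i, IsExceptional 𝕜 (E i)) ∧
    ∀ i j : Fin n, i < j → ∀ l : ℤ, ∀ f : E j ⟶ (E i)⟦l⟧, f = 0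

/-- A full exceptional sequence. -/
def IsFullExcSeq {n : ℕ} (E : Fin n → D) : Prop :=
  IsExcSeq 𝕜 E ∧ gen (Set.range E) = Set.univ

end Linear

/-- `L` is a left mutation `L_E F` of the exceptional pair `(E, F)`: there is a
distinguished triangle `L ⟶ M ⟶ F ⟶ L[1]` in which `M ∈ ⟨E⟩` plays the role of
`Hom^•(E, F) ⊗ E` (for an exceptional pair this is équivalent to the universal
evaluation triangle, since in addition `Hom^•(E, L) = 0`). -/
def IsLeftMutObj (E F L : D) : Prop :=
  (∀ l : ℤ, ∀ φ : E ⟶ L⟦l⟧, φ = 0) ∧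
    ∃ (M : D) (f : L ⟶ M) (g : M ⟶ F) (h : F ⟶ L⟦(1 : ℤ)⟧),
      Triangle.mk f g h ∈ (distTriang D) ∧ M ∈ gen {E}

/-- `R` is a right mutation `R_F E` of the exceptional pair `(E, F)`, dually to
`IsLeftMutObj`: there is a distinguished triangle `E ⟶ M ⟶ R ⟶ E[1]` with
`M ∈ ⟨F⟩` playing the role of `Hom^•(E, F)^* ⊗ F`, and `Hom^•(R, F) = 0`. -/
def IsRightMutObj (E F R : D) : Prop :=
  (∀ l : ℤ, ∀ φ : R ⟶ F⟦l⟧, φ = 0) ∧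
    ∃ (M : D) (f : E ⟶ M) (g : M ⟶ R) (h : R ⟶ E⟦(1 : ℤ)⟧),
      Triangle.mk f g h ∈ (distTriang D) ∧ M ∈ gen {F}

/-- `E'` is the left mutation `L_i E` of the exceptional sequence `E` at the
(0-based) position `i`. -/
def SeqLeftMut {n : ℕ} (E E' : Fin n → D) (i : ℕ) (hi : i + 1 < n) : Prop :=
  IsLeftMutObj (E ⟨i, Nat.lt_of_succ_lt hi⟩) (E ⟨i + 1, hi⟩) (E' ⟨i, Nat.lt_of_succ_lt hi⟩) ∧
    E' ⟨i + 1, hi⟩ = E ⟨i, Nat.lt_of_succ_lt hi⟩ ∧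
    ∀ k : Fin n, k ≠ ⟨i, Nat.lt_of_succ_lt hi⟩ → k ≠ ⟨i + 1, hi⟩ → E' k = E k

/-- `E'` is the right mutation `R_i E` of the exceptional sequence `E` at the
(0-based) position `i`. -/
def SeqRightMut {n : ℕ} (E E' : Fin n → D) (i : ℕ) (hi : i + 1 < n) : Prop :=
  IsRightMutObj (E ⟨i, Nat.lt_of_succ_lt hi⟩) (E ⟨i + 1, hi⟩) (E' ⟨i + 1, hi⟩) ∧
    E' ⟨i, Nat.lt_of_succ_lt hi⟩ = E ⟨i + 1, hi⟩ ∧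
    ∀ k : Fin n, k ≠ ⟨i, Nat.lt_of_succ_lt hi⟩ → k ≠ ⟨i + 1, hi⟩ → E' k = E k

/-- The class of morphisms of `D` whose cone lies in `U`; the Verdier quotient
`D/U` is the localization of `D` at this class. -/
def coneIn (U : Set D) : MorphismProperty D :=
  fun X _ f => ∃ (Z : D) (g : _ ⟶ Z) (h : Z ⟶ X⟦(1 : ℤ)⟧),
    Triangle.mk f g h ∈ (distTriang D) ∧ Z ∈ U

/-- The essential image `Q A` of a subcategory `A` under a functor `Q`. -/
def imageSet {E' : Type u₂} [Category.{v₂} E'] (Q : D ⥤ E') (A : Set D) : Set E' :=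
  {Y : E' | ∃ X ∈ A, Nonempty (Q.obj X ≅ Y)}

section Aux

lemma subset_gen (S : Set D) : S ⊆ gen S :=
  fun _ hx => Set.mem_sInter.2 fun _ hT => hT.2 hx

lemma gen_subset {S T : Set D} (hT : IsTriangClosed T) (hST : S ⊆ T) : gen S ⊆ T :=
  fun _ hx => Set.mem_sInter.1 hx T ⟨hT, hST⟩

lemma isTriangClosed_gen (S : Set D) : IsTriangClosed (gen S) where
  zero_mem := Set.mem_sInter.2 fun _ hT => hT.1.zero_mem
  iso_mem e hX := Set.mem_sInter.2 fun T hT =>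
    hT.1.iso_mem e (Set.mem_sInter.1 hX T hT)
  shift_mem X hX n := Set.mem_sInter.2 fun T hT =>
    hT.1.shift_mem X (Set.mem_sInter.1 hX T hT) n
  ext_mem T' hT' h1 h3 := Set.mem_sInter.2 fun T hT =>
    hT.1.ext_mem T' hT' (Set.mem_sInter.1 h1 T hT) (Set.mem_sInter.1 h3 T hT)
  summand_mem s r hsr hX := Set.mem_sInter.2 fun T hT =>
    hT.1.summand_mem s r hsr (Set.mem_sInter.1 hX T hT)

lemma gen_gen (S : Set D) : gen (gen S) = gen S :=
  le_antisymm (gen_subset (isTriangClosed_gen S) le_rfl) (subset_gen _)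

lemma isTriangClosed_lOrth {S : Set D} (hS : ∀ X ∈ S, ∀ m : ℤ, X⟦m⟧ ∈ S) :
    IsTriangClosed (lOrth S) where
  zero_mem := fun Z _ f => (isZero_zero D).eq_of_src f 0
  iso_mem := by
    intro X Y e hX Z hZ f
    have h1 : e.hom ≫ f = 0 := hX Z hZ _
    calc f = e.inv ≫ (e.hom ≫ f) := by simp
    _ = 0 := by rw [h1, comp_zero]
  shift_mem := by
    intro X hX n Z hZ f
    have h1 : ((shiftFunctorCompIsoId D n (-n) (by omega)).app X).inv ≫
        (shiftFunctor D (-n)).map f = 0 := hX _ (hS Z hZ (-n)) _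
    have h2 : (shiftFunctor D (-n)).map f = 0 := by
      rw [← Iso.hom_inv_id_assoc ((shiftFunctorCompIsoId D n (-n) (by omega)).app X)
        ((shiftFunctor D (-n)).map f), h1, comp_zero]
    exact (shiftFunctor D (-n)).map_injective (by rw [h2, Functor.map_zero])
  ext_mem := by
    intro T' hT' h1 h3 Z hZ f
    obtain ⟨g, hg⟩ := Pretriangulated.Triangle.yoneda_exact₂ T' hT' f (h1 Z hZ _)
    rw [hg, h3 Z hZ g, comp_zero]
  summand_mem := by
    intro X Y s r hsr hX Z hZ f
    calc f = (s ≫ r) ≫ f := by rw [hsr, Category.id_comp]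
    _ = s ≫ (r ≫ f) := by rw [Category.assoc]
    _ = 0 := by rw [hX Z hZ (r ≫ f), comp_zero]

lemma isTriangClosed_rOrth {S : Set D} (hS : ∀ X ∈ S, ∀ m : ℤ, X⟦m⟧ ∈ S) :
    IsTriangClosed (rOrth S) where
  zero_mem := fun Z _ f => (isZero_zero D).eq_of_tgt f 0
  iso_mem := by
    intro X Y e hX Z hZ f
    have h1 : f ≫ e.inv = 0 := hX Z hZ _
    calc f = (f ≫ e.inv) ≫ e.hom := by simp
    _ = 0 := by rw [h1, zero_comp]
  shift_mem := by
    intro X hX n Z hZ f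
    have h1 : (shiftFunctor D (-n)).map f ≫
        ((shiftFunctorCompIsoId D n (-n) (by omega)).app X).hom = 0 :=
      hX _ (hS Z hZ (-n)) _
    have h2 : (shiftFunctor D (-n)).map f = 0 := by
      calc (shiftFunctor D (-n)).map f
          = ((shiftFunctor D (-n)).map f ≫
              ((shiftFunctorCompIsoId D n (-n) (by omega)).app X).hom) ≫
            ((shiftFunctorCompIsoId D n (-n) (by omega)).app X).inv := by simp
        _ = 0 := by rw [h1, zero_comp]
    exact (shiftFunctor D (-n)).map_injective (by rw [h2, Functor.map_zero])
  ext_mem := by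
    intro T' hT' h1 h3 Z hZ f
    obtain ⟨g, hg⟩ := Pretriangulated.Triangle.coyoneda_exact₂ T' hT' f (h3 Z hZ _)
    rw [hg, h1 Z hZ g, zero_comp]
  summand_mem := by
    intro X Y s r hsr hX Z hZ f
    calc f = (f ≫ s) ≫ r := by rw [Category.assoc, hsr, Category.comp_id]
    _ = 0 := by rw [hX Z hZ (f ≫ s), zero_comp]

variable {amb : Set D} {Φ : Type*} [LinearOrder Φ] {P : Φ → Set D}

lemma IsTStabOn.shift_mem (hP : IsTStabOn amb P) {φ : Φ} {X : D}
    (hX : X ∈ P φ) (m : ℤ) : X⟦m⟧ ∈ P φ := by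
  induction m using Int.induction_on with
  | zero => exact (hP.semistable φ).iso_mem ((shiftFunctorZero D ℤ).app X).symm hX
  | succ n ih =>
    exact (hP.semistable φ).iso_mem ((shiftFunctorAdd D (n : ℤ) 1).app X).symm
      ((hP.shiftInv φ _).1 ih)
  | pred n ih =>
    exact (hP.shiftInv φ _).2
      ((hP.semistable φ).iso_mem ((shiftFunctorAdd' D (-(n:ℤ)-1) 1 (-(n:ℤ)) (by ring)).app X) ih)

lemma IsTStabOn.hom_eq_zero (hP : IsTStabOn amb P) {φ' φ'' : Φ} (hlt : φ'' < φ')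
    {X Y : D} (hX : X ∈ P φ') (hY : Y ∈ P φ'') (f : X ⟶ Y) : f = 0 := by
  have h1 : f ≫ ((shiftFunctorZero D ℤ).app Y).inv = 0 :=
    hP.hom φ' φ'' hlt X hX Y hY 0 le_rfl _
  calc f = (f ≫ ((shiftFunctorZero D ℤ).app Y).inv) ≫ ((shiftFunctorZero D ℤ).app Y).hom := by
        simp
  _ = 0 := by rw [h1, zero_comp]

lemma IsTStabOn.zero_mem' (hP : IsTStabOn amb P) (φ : Φ) {Z : D} (hZ : IsZero Z) :
    Z ∈ P φ := by
  obtain ⟨X, hX, _⟩ := (hP.semistable φ).nonzero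
  have h0 : (contractibleTriangle X).rotate.obj₂ ∈ P φ :=
    (hP.semistable φ).ext_mem _ (rot_of_distTriang _ (contractible_distinguished X))
      hX ((hP.shiftInv φ X).1 hX)
  exact (hP.semistable φ).iso_mem ((isZero_zero D).iso hZ) h0

end Aux

section Core

lemma mem_of_nonzero_mem {n m : ℕ} {P : Fin n → Set D} {Q : Fin m → Set D}
    (hP : IsTStabOn Set.univ P) (hQ : IsTStabOn Set.univ Q)
    {r : Fin m → Fin n} (hr : StrictMono r)
    (hsub : ∀ j, Q j ⊆ P (r j)) {ψ : Fin m} {X : D}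
    (hX : X ∈ P (r ψ)) (hXnz : ¬ IsZero X) : X ∈ Q ψ := by
  obtain ⟨k, Y, idx, hY0, hYlast, hidx, htri⟩ := hQ.hn X (Set.mem_univ X) hXnz
  subst hY0
  have hk : k ≠ 0 := by rintro rfl; exact hXnz hYlast
  obtain ⟨K, rfl⟩ : ∃ K, k = K + 1 := ⟨k - 1, by omega⟩
  have hzero : (0 : Fin (K + 2)) = ⟨0, by omega⟩ := by
    ext
    simp
  rw [hzero] at hX
  rw [show (Y 0 ∈ Q ψ) = (Y ⟨0, by omega⟩ ∈ Q ψ) from by rw [hzero]]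
  choose A ff gg hh hdist hmem hnz using htri
  set t : Fin (K+1) := Fin.last K with ht
  have hzt : IsZero (Y t.succ) := by rw [ht, Fin.succ_last]; exact hYlast
  have hisog : IsIso (gg t) :=
    (Pretriangulated.Triangle.isZero₁_iff_isIso₂ _ (hdist t)).1 hzt
  have hWQ : Y t.castSucc ∈ Q (idx t) :=
    (hQ.semistable _).iso_mem (asIso (gg t)).symm (hmem t)
  have hWnz : ¬ IsZero (Y t.castSucc) := fun hz => hnz t (hz.of_iso (asIso (gg t)).symm)
  have hWP : Y t.castSucc ∈ P (r (idx t)) := hsub _ hWQ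
  -- nonzero map from the top piece down to X = Y 0
  have chain : ∀ (d j : ℕ) (_ : j + d = K), ∃ u : Y t.castSucc ⟶ Y ⟨j, by omega⟩, u ≠ 0 := by
    intro d
    induction d with
    | zero =>
      intro j hj
      obtain rfl : j = K := by omega
      refine ⟨𝟙 _, fun h0 => hWnz ?_⟩
      rw [IsZero.iff_id_eq_zero]
      exact h0
    | succ d ih =>
      intro j hj
      obtain ⟨u, hu⟩ := ih (j + 1) (by omega)
      have hjK : j < K := by omega
      set jf : Fin (K+1) := ⟨j, by omega⟩ with hjf
      refine ⟨u ≫ ff jf, fun h0 => hu ?_⟩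
      obtain ⟨w, hw⟩ := Pretriangulated.Triangle.coyoneda_exact₂
        (Triangle.mk (ff jf) (gg jf) (hh jf)).invRotate
        (inv_rot_of_distTriang _ (hdist jf)) u h0
      have hjt : jf < t := by
        rw [hjf, ht, Fin.lt_def]
        exact hjK
      have hw0 : w = 0 :=
        hP.hom (r (idx t)) (r (idx jf)) (hr (hidx hjt)) _ hWP _ (hsub _ (hmem jf))
          (-1) (by omega) w
      rw [hw, hw0, zero_comp]; rfl
  obtain ⟨F0, hF0⟩ := chain K 0 (by omega)
  have hle1 : r (idx t) ≤ r ψ := by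
    by_contra hgt
    push_neg at hgt
    exact hF0 (hP.hom_eq_zero hgt hWP hX F0)
  set j0 : Fin (K+1) := ⟨0, by omega⟩ with hj0
  -- vanishing of maps out of shifted tails into the bottom piece
  have Nclaim : ∀ (d j : ℕ) (_ : 1 ≤ j) (_ : j + d = K + 1),
      ∀ v : (Y ⟨j, by omega⟩)⟦(1:ℤ)⟧ ⟶ A j0, v = 0 := by
    intro d
    induction d with
    | zero =>
      intro j _ hj v
      obtain rfl : j = K + 1 := by omega
      exact ((shiftFunctor D (1:ℤ)).map_isZero hYlast).eq_of_src v 0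
    | succ d ih =>
      intro j hj1 hj v
      set jf : Fin (K+1) := ⟨j, by omega⟩ with hjf
      have h1 : ((ff jf)⟦(1:ℤ)⟧') ≫ v = 0 := ih (j + 1) (by omega) (by omega) _
      have hcond : (Triangle.mk (ff jf) (gg jf) (hh jf)).rotate.rotate.mor₂ ≫ v = 0 := by
        simp only [Triangle.rotate_mor₂, Triangle.rotate_mor₃, Triangle.mk_mor₁]
        exact (Preadditive.neg_comp _ _).trans ((congrArg Neg.neg h1).trans neg_zero)
      obtain ⟨w, hw⟩ := Pretriangulated.Triangle.yoneda_exact₃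
        (Triangle.mk (ff jf) (gg jf) (hh jf)).rotate.rotate
        (rot_of_distTriang _ (rot_of_distTriang _ (hdist jf))) v hcond
      have h0jf : j0 < jf := by
        rw [hj0, hjf, Fin.lt_def]
        exact hj1
      have hw0 : w = 0 :=
        hP.hom_eq_zero (hr (hidx h0jf)) (hP.shift_mem (hsub _ (hmem jf)) 1)
          (hsub _ (hmem j0)) w
      rw [hw, hw0, comp_zero]; rfl
  have hg0 : gg j0 ≠ 0 := by
    intro h0
    obtain ⟨w, hw⟩ := Pretriangulated.Triangle.yoneda_exact₃
      (Triangle.mk (ff j0) (gg j0) (hh j0)) (hdist j0) (𝟙 (A j0))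
      (by show gg j0 ≫ 𝟙 (A j0) = 0; rw [h0, zero_comp])
    have hw0 : w = 0 := Nclaim K 1 le_rfl (by omega) w
    rw [hw0, comp_zero] at hw
    exact hnz j0 ((IsZero.iff_id_eq_zero (A j0)).2 hw)
  have hle2 : r ψ ≤ r (idx j0) := by
    by_contra hgt
    push_neg at hgt
    exact hg0 (hP.hom_eq_zero hgt hX (hsub _ (hmem j0)) (gg j0))
  have hK0 : K = 0 := by
    by_contra hK
    have h0t : j0 < t := by
      rw [hj0, ht, Fin.lt_def]
      show 0 < K
      omega
    exact absurd (le_trans hle1 hle2) (not_le.2 (hr (hidx h0t)))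
  subst hK0
  have htj0 : t = j0 := rfl
  have hrr : idx t = ψ := hr.injective (le_antisymm hle1 (htj0 ▸ hle2))
  rw [← hrr]
  exact hWQ

end Core

/-- If `(Φ_n, {Π i})` is a finite t-stability on `D` such that for
every `i` and all nonzero `X, Y ∈ Π i` one has `Hom(⟨X⟩, ⟨Y⟩) ≠ 0 ≠ Hom(⟨Y⟩, ⟨X⟩)`,
then `(Φ_n, {Π i})` is finite finest. -/
theorem finest_of_hom_nonvanishing
    (𝕜 : Type w) [Field 𝕜] [IsAlgClosed 𝕜] [CategoryTheory.Linear 𝕜 D] (n : ℕ) (P : Fin n → Set D) (hP : IsFiniteTStab P)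
    (h : ∀ i : Fin n, ∀ X ∈ P i, ∀ Y ∈ P i, ¬ IsZero X → ¬ IsZero Y →
      ¬ homOrth (gen {X}) (gen {Y}) ∧ ¬ homOrth (gen {Y}) (gen {X})) :
    IsFinestTStab P := by
  have hP' : IsTStabOn Set.univ P := hP
  refine ⟨hP, ?_⟩
  intro m Q hQ hfiner
  have hQ' : IsTStabOn Set.univ Q := hQ
  obtain ⟨r, hsurj, hmono, hgen⟩ := hfiner
  -- each Q j is contained in P (r j)
  have hQP : ∀ j, Q j ⊆ P (r j) := by
    intro j x hx
    rw [hgen (r j)]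
    exact subset_gen _ (Set.mem_biUnion (show j ∈ {φ : Fin m | r φ = r j} from rfl) hx)
  -- r is injective
  have key : ∀ a b : Fin m, a < b → r a ≠ r b := by
    intro a b hab heq
    obtain ⟨X, hXQ, hXnz⟩ := (hQ'.semistable b).nonzero
    obtain ⟨Z, hZQ, hZnz⟩ := (hQ'.semistable a).nonzero
    have hXP : X ∈ P (r b) := hQP b hXQ
    have hZP : Z ∈ P (r b) := heq ▸ hQP a hZQ
    apply (h (r b) X hXP Z hZP hXnz hZnz).1
    have hL : gen {X} ⊆ lOrth (Q a) :=
      gen_subset (isTriangClosed_lOrth (fun W hW mm => hQ'.shift_mem hW mm))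
        (Set.singleton_subset_iff.2 (fun W hW f => hQ'.hom_eq_zero hab hXQ hW f))
    have hR : gen {Z} ⊆ rOrth (gen {X}) :=
      gen_subset (isTriangClosed_rOrth (isTriangClosed_gen {X}).shift_mem)
        (Set.singleton_subset_iff.2 (fun W hW f => hL hW _ hZQ f))
    intro W hW V hV f
    exact hR hV W hW f
  have hinj : Function.Injective r := by
    intro a b hab
    rcases lt_trichotomy a b with hlt | heq | hgt
    · exact absurd hab (key a b hlt)
    · exact heq
    · exact absurd hab.symm (key b a hgt)
  have hrs : StrictMono r := hmono.strictMono_of_injective hinj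
  -- `P (r ψ) = gen (Q ψ)`
  have hPgenQ : ∀ ψ : Fin m, P (r ψ) = gen (Q ψ) := by
    intro ψ
    have hs : ⋃ φ ∈ {φ : Fin m | r φ = r ψ}, Q φ = Q ψ := by
      ext x
      simp only [Set.mem_iUnion, Set.mem_setOf_eq]
      constructor
      · rintro ⟨φ, hφ, hx⟩
        exact (hinj hφ) ▸ hx
      · intro hx
        exact ⟨ψ, rfl, hx⟩
    rw [hgen (r ψ), hs]
  -- `Q ψ = P (r ψ)`
  have hQeqP : ∀ ψ : Fin m, Q ψ = P (r ψ) := by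
    intro ψ
    refine Set.Subset.antisymm (hQP ψ) ?_
    intro x hx
    by_cases hz : IsZero x
    · exact hQ'.zero_mem' ψ hz
    · exact mem_of_nonzero_mem hP' hQ' hrs hQP hx hz
  -- construct the coarsening map in the other direction
  have hbij : Function.Bijective r := ⟨hinj, hsurj⟩
  let e : Fin m ≃ Fin n := Equiv.ofBijective r hbij
  refine ⟨e.symm, e.symm.surjective, ?_, ?_⟩
  · intro a b hab
    by_contra hn'
    push_neg at hn'
    have : r (e.symm b) < r (e.symm a) := hrs hn'
    have hb : r (e.symm b) = b := e.apply_symm_apply b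
    have ha : r (e.symm a) = a := e.apply_symm_apply a
    rw [hb, ha] at this
    exact absurd this (not_lt.2 hab)
  · intro ψ
    have hsetP : ⋃ φ ∈ {φ : Fin n | e.symm φ = ψ}, P φ = P (r ψ) := by
      ext x
      simp only [Set.mem_iUnion, Set.mem_setOf_eq]
      constructor
      · rintro ⟨φ, hφ, hx⟩
        have : φ = r ψ := by
          have := congrArg e hφ.symm
          rw [Equiv.apply_symm_apply] at this
          exact this.symm ▸ rfl
        exact this ▸ hx
      · intro hx
        exact ⟨r ψ, e.symm_apply_apply ψ, hx⟩
    rw [hsetP, hQeqP ψ, hPgenQ ψ, gen_gen]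

end SODPaper
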